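/- arXiv:1904.04951 — 3 statements merged into one kernel-verified Lean document; each statement's English description precedes it below -/
import Mathlib

section
/- Consider the semi-implicit Euler scheme nᶠ_{k+1} = (nᶠ_k + Δt·π_cf(a_k)) / (1 + Δt·(π_fc(a_k) + π_cf(a_k))) and nᶜ_{k+1} = (nᶜ_k + Δt·π_fc(a_k)) / (1 + Δt·(π_fc(a_k) + π_cf(a_k))), where π_cf(a_k), π_fc(a_k) > 0. If nᶠ_0 ≥ 0, nᶜ_0 ≥ 0 and nᶠ_0 + nᶜ_0 = 1, then for every k ∈ ℕ and every Δt > 0: nᶠ_k ≥ 0, nᶜ_k ≥ 0, and nᶠ_k + nᶜ_k = 1. -/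
/-- When `x + y = 1`, the numerators of the two updated shares add up to the common denominator. -/
theorem semiImplicit_shares_sum_eq_one {h p q x y : ℝ} (hden : 0 < 1 + h * (q + p))
    (hxy : x + y = 1) :
    (x + h * p) / (1 + h * (q + p)) + (y + h * q) / (1 + h * (q + p)) = 1 := by
  rw [← add_div, div_eq_one_iff_eq hden.ne']
  linarith

/-- The semi-implicit Euler scheme for the Franke-Westerhoff agent shares
preserves nonnegativity and the normalization `nᶠ + nᶜ = 1` for every step
size `Δt > 0` and strictly positive switching rates. -/
theorem semi_implicit_simplex_invariance
    (Δt : ℝ) (hΔt : 0 < Δt)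
    (πcf πfc : ℕ → ℝ) (hπcf : ∀ k, 0 < πcf k) (hπfc : ∀ k, 0 < πfc k)
    (nf nc : ℕ → ℝ)
    (hnf0 : 0 ≤ nf 0) (hnc0 : 0 ≤ nc 0) (hsum0 : nf 0 + nc 0 = 1)
    (hnf : ∀ k, nf (k + 1) =
      (nf k + Δt * πcf k) / (1 + Δt * (πfc k + πcf k)))
    (hnc : ∀ k, nc (k + 1) =
      (nc k + Δt * πfc k) / (1 + Δt * (πfc k + πcf k))) :
    ∀ k, 0 ≤ nf k ∧ 0 ≤ nc k ∧ nf k + nc k = 1 := by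
  intro k
  induction k with
  | zero => exact ⟨hnf0, hnc0, hsum0⟩
  | succ k ih =>
    obtain ⟨hnf_nonneg, hnc_nonneg, hsum⟩ := ih
    have hcf := hπcf k
    have hfc := hπfc k
    rw [hnf, hnc]
    exact ⟨by positivity, by positivity,
      semiImplicit_shares_sum_eq_one (by positivity) hsum⟩
end

section
/- Let r > 0 and let Z : [0,∞) → ℝ_{≥0} be continuously differentiable with |Z'(t)| ≤ B for some B > 0. Let γᵢ ∈ (0,1) and wᵢ⁰ > 0 for i = 1,…,N. Then the ODE system ẇᵢ(t) = r·wᵢ(t) + γᵢ·wᵢ(t)·Z(t) / ((1/N)·Σⱼ (1−γⱼ)·γⱼ·wⱼ(t)), wᵢ(0) = wᵢ⁰, has a unique solution on [0,∞), and along this solution (1/N)·Σⱼ (1−γⱼ)·γⱼ·wⱼ(t) ≥ (1/N)·Σⱼ (1−γⱼ)·γⱼ·wⱼ(0) > 0 for all t ≥ 0. -/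
/-!
Substituting `wᵢ(t) = wᵢ⁰ e^{rt + γᵢ φ(t)}` makes the weighted wealth equal to `e^{rt} F(φ(t))`
with `F(x) = Σⱼ aⱼ γⱼ e^{γⱼ x}`, `aⱼ = (1 - γⱼ) wⱼ⁰ / N`, and reduces the system to the scalar
equation `F(φ) φ' = e^{-rt} Z`, `φ(0) = 0`. Since `F = H'` for `H(x) = Σⱼ aⱼ e^{γⱼ x}`, an
increasing bijection of `ℝ` onto `(0, ∞)`, it is solved by `φ(t) = H⁻¹(H(0) + ∫₀ᵗ e^{-rs} Z(s) ds)`.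
As `Z ≥ 0`, `φ ≥ 0`, so every `wᵢ` and hence the weighted wealth grows. The right-hand side is
`C¹` in `w` wherever the weighted wealth is nonzero, hence locally Lipschitz along the explicit
solution, and that alone forces any other solution to agree with it on `[0, ∞)`.
-/

open Set Filter Topology Function Real

section Uniqueness

variable {E : Type*} [NormedAddCommGroup E] [NormedSpace ℝ E]

theorem ODE_solution_unique_of_mem_Ici {v : ℝ → E → E} {f g : ℝ → E} {a : ℝ}
    (hv : ∀ t ∈ Ici a, ∃ K, ∃ s ∈ 𝓝 (f t), ∀ᶠ τ in 𝓝[≥] t, LipschitzOnWith K (v τ) s)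
    (hf : ∀ t ∈ Ici a, HasDerivAt f (v t (f t)) t)
    (hg : ∀ t ∈ Ici a, HasDerivAt g (v t (g t)) t)
    (ha : f a = g a) :
    EqOn f g (Ici a) := by
  have hcont : ∀ b, ContinuousOn (fun t => f t - g t) (Icc a b) := fun b t ht =>
    ((hf t ht.1).continuousAt.sub (hg t ht.1).continuousAt).continuousWithinAt
  intro b hb
  suffices Icc a b ⊆ {t | f t = g t} from this ⟨hb, le_rfl⟩
  refine IsClosed.Icc_subset_of_forall_mem_nhdsWithin ?_ ha ?_
  · convert (hcont b).preimage_isClosed_of_isClosed isClosed_Icc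
      (isClosed_singleton (x := (0 : E))) using 1
    ext t
    simp [sub_eq_zero, and_comm]
  · rintro t ⟨hft, hta, -⟩
    obtain ⟨K, s, hs, hlip⟩ := hv t hta
    have hfs : ∀ᶠ τ in 𝓝[≥] t, f τ ∈ s :=
      nhdsWithin_le_nhds ((hf t hta).continuousAt.eventually_mem hs)
    have hgs : ∀ᶠ τ in 𝓝[≥] t, g τ ∈ s :=
      nhdsWithin_le_nhds ((hg t hta).continuousAt.eventually_mem (hft ▸ hs))
    obtain ⟨c, htc, hc⟩ := mem_nhdsGE_iff_exists_Ico_subset.mp (hlip.and (hfs.and hgs))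
    have hIcc : ∀ τ ∈ Icc t c, a ≤ τ := fun τ hτ => hta.trans hτ.1
    have heq : EqOn f g (Icc t c) :=
      ODE_solution_unique_of_mem_Icc_right (fun τ hτ => (hc hτ).1)
        (fun τ hτ => (hf τ (hIcc τ hτ)).continuousAt.continuousWithinAt)
        (fun τ hτ => (hf τ (hIcc τ (Ico_subset_Icc_self hτ))).hasDerivWithinAt)
        (fun τ hτ => (hc hτ).2.1)
        (fun τ hτ => (hg τ (hIcc τ hτ)).continuousAt.continuousWithinAt)
        (fun τ hτ => (hg τ (hIcc τ (Ico_subset_Icc_self hτ))).hasDerivWithinAt)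
        (fun τ hτ => (hc hτ).2.2) hft
    exact mem_of_superset (Ico_mem_nhdsGT htc) fun τ hτ => heq (Ico_subset_Icc_self hτ)

theorem ContDiffAt.exists_eventually_lipschitzOnWith_smul_add_smul {G : E → E} {y : E}
    (hG : ContDiffAt ℝ 1 G y) (r : ℝ) {c : ℝ → ℝ} {t : ℝ} (hc : ContinuousAt c t) :
    ∃ K, ∃ s ∈ 𝓝 y, ∀ᶠ τ in 𝓝 t, LipschitzOnWith K (fun x => r • x + c τ • G x) s := by
  obtain ⟨K, s, hs, hK⟩ := hG.exists_lipschitzOnWith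
  refine ⟨‖r‖₊ + (‖c t‖₊ + 1) * K, s, hs, ?_⟩
  filter_upwards [hc.norm.eventually (gt_mem_nhds (lt_add_one ‖c t‖))] with τ hτ
  refine ((lipschitzWith_smul r).lipschitzOnWith).add ?_
  refine (((lipschitzWith_smul (c τ)).comp_lipschitzOnWith hK)).weaken ?_
  gcongr
  exact_mod_cast hτ.le

end Uniqueness

theorem hasDerivAt_invFun_of_range_mem_nhds {H F : ℝ → ℝ} (hH : ∀ x, HasDerivAt H (F x) x)
    (hF : ∀ x, 0 < F x) {y : ℝ} (hy : range H ∈ 𝓝 y) :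
    HasDerivAt (invFun H) (F (invFun H y))⁻¹ y := by
  have hmono : StrictMono H := strictMono_of_hasDerivAt_pos hH hF
  have hleft : LeftInverse (invFun H) H := leftInverse_invFun hmono.injective
  have hcont : ContinuousAt (invFun H) y := by
    refine continuousAt_of_monotoneOn_of_image_mem_nhds ?_ hy ?_
    · rintro _ ⟨x₁, rfl⟩ _ ⟨x₂, rfl⟩ h
      rwa [hleft, hleft, ← hmono.le_iff_le]
    · rw [← range_comp, hleft.comp_eq_id, range_id]
      exact univ_mem
  exact HasDerivAt.of_local_left_inverse hcont (hH _) (hF _).ne'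
    (eventually_of_mem hy fun z hz => invFun_eq hz)

theorem exists_hasDerivAt_eq_div_of_range_eq_Ioi {H F g : ℝ → ℝ}
    (hH : ∀ x, HasDerivAt H (F x) x) (hF : ∀ x, 0 < F x) (hrange : range H = Ioi 0)
    (hg : Continuous g) (hg₀ : ∀ t, 0 ≤ t → 0 ≤ g t) :
    ∃ φ : ℝ → ℝ, φ 0 = 0 ∧ ∀ t, 0 ≤ t → 0 ≤ φ t ∧ HasDerivAt φ (g t / F (φ t)) t := by
  have hmono : StrictMono H := strictMono_of_hasDerivAt_pos hH hF
  have hleft : LeftInverse (invFun H) H := leftInverse_invFun hmono.injective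
  set v : ℝ → ℝ := fun t => H 0 + ∫ s in (0 : ℝ)..t, g s
  have hv : ∀ t, 0 ≤ t → H 0 ≤ v t := fun t ht =>
    le_add_of_nonneg_right (intervalIntegral.integral_nonneg ht fun s hs => hg₀ s hs.1)
  have hH₀ : H 0 ∈ Ioi 0 := hrange ▸ mem_range_self 0
  have hv_mem : ∀ t, 0 ≤ t → v t ∈ range H := fun t ht => hrange ▸ hH₀.trans_le (hv t ht)
  refine ⟨invFun H ∘ v, by simp [v, hleft 0], fun t ht => ⟨?_, ?_⟩⟩
  · rw [← hmono.le_iff_le, comp_apply, invFun_eq (hv_mem t ht)]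
    exact hv t ht
  · have hderiv := hasDerivAt_invFun_of_range_mem_nhds hH hF
      (hrange ▸ isOpen_Ioi.mem_nhds (hH₀.trans_le (hv t ht)))
    rw [div_eq_inv_mul]
    exact hderiv.comp t ((hg.integral_hasStrictDerivAt 0 t).hasDerivAt.const_add (H 0))

section ExpSum

variable {ι : Type*} [Fintype ι] (a k : ι → ℝ)

theorem hasDerivAt_sum_mul_exp (x : ℝ) :
    HasDerivAt (fun x => ∑ j, a j * exp (k j * x)) (∑ j, a j * k j * exp (k j * x)) x := by
  refine HasDerivAt.fun_sum fun j _ => ?_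
  have hj := (((hasDerivAt_id x).const_mul (k j)).exp).const_mul (a j)
  simp only [id, mul_one] at hj
  exact hj.congr_deriv (by ring)

theorem sum_mul_exp_pos [Nonempty ι] (ha : ∀ j, 0 < a j) (x : ℝ) :
    0 < ∑ j, a j * exp (k j * x) :=
  Finset.sum_pos (fun j _ => mul_pos (ha j) (exp_pos _)) Finset.univ_nonempty

theorem range_sum_mul_exp [Nonempty ι] (ha : ∀ j, 0 < a j) (hk : ∀ j, 0 < k j) :
    range (fun x => ∑ j, a j * exp (k j * x)) = Ioi 0 := by
  refine (range_subset_iff.mpr (sum_mul_exp_pos a k ha)).antisymm fun y (hy : 0 < y) => ?_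
  have hcont : Continuous fun x => ∑ j, a j * exp (k j * x) := by fun_prop
  refine mem_range_of_exists_le_of_exists_ge hcont ?_ ?_
  · have hbot : Tendsto (fun x => ∑ j, a j * exp (k j * x)) atBot (𝓝 0) := by
      simpa using tendsto_finsetSum Finset.univ fun j _ =>
        (tendsto_exp_atBot.comp (tendsto_id.const_mul_atBot (hk j))).const_mul (a j)
    exact ((hbot.eventually (gt_mem_nhds hy)).exists).imp fun _ h => h.le
  · obtain ⟨i⟩ := ‹Nonempty ι›
    have htop : Tendsto (fun x => a i * exp (k i * x)) atTop atTop :=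
      (tendsto_exp_atTop.comp (tendsto_id.const_mul_atTop (hk i))).const_mul_atTop (ha i)
    obtain ⟨x, hx⟩ := (htop.eventually_ge_atTop y).exists
    exact ⟨x, hx.trans (Finset.single_le_sum (f := fun j => a j * exp (k j * x))
      (fun j _ => (mul_pos (ha j) (exp_pos _)).le) (Finset.mem_univ i))⟩

end ExpSum

noncomputable def weightedWealth {N : ℕ} (γ w : Fin N → ℝ) : ℝ :=
  (1 / (N : ℝ)) * ∑ j, (1 - γ j) * γ j * w j

noncomputable def llsField {N : ℕ} (r : ℝ) (Z : ℝ → ℝ) (γ : Fin N → ℝ) (t : ℝ)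
    (w : Fin N → ℝ) : Fin N → ℝ :=
  fun i => r * w i + γ i * w i * Z t / weightedWealth γ w

section LLS

variable {N : ℕ} {γ : Fin N → ℝ}

theorem weightedWealth_pos (hN : 0 < N) (hγ : ∀ i, γ i ∈ Ioo (0 : ℝ) 1) {w : Fin N → ℝ}
    (hw : ∀ i, 0 < w i) : 0 < weightedWealth γ w := by
  have : Nonempty (Fin N) := Fin.pos_iff_nonempty.mp hN
  exact mul_pos (by positivity) (Finset.sum_pos (fun j _ =>
    mul_pos (mul_pos (sub_pos.mpr (hγ j).2) (hγ j).1) (hw j)) Finset.univ_nonempty)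

theorem weightedWealth_mono (hγ : ∀ i, γ i ∈ Ioo (0 : ℝ) 1) {w w' : Fin N → ℝ} (h : w ≤ w') :
    weightedWealth γ w ≤ weightedWealth γ w' := by
  unfold weightedWealth
  gcongr with j
  exacts [mul_nonneg (sub_nonneg.mpr (hγ j).2.le) (hγ j).1.le, h j]

theorem llsField_eq_smul_add_smul (r : ℝ) (Z : ℝ → ℝ) (γ : Fin N → ℝ) (t : ℝ) :
    llsField r Z γ t = fun w => r • w + Z t • fun i => γ i * w i / weightedWealth γ w := by
  ext w i
  simp only [llsField, Pi.add_apply, Pi.smul_apply, smul_eq_mul]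
  ring

theorem contDiffAt_mul_div_weightedWealth {w : Fin N → ℝ} (hw : weightedWealth γ w ≠ 0) :
    ContDiffAt ℝ 1 (fun w i => γ i * w i / weightedWealth γ w) w := by
  refine contDiffAt_pi.mpr fun i => ?_
  unfold weightedWealth
  fun_prop (disch := exact hw)

theorem llsField_exists_eventually_lipschitzOnWith (r : ℝ) {Z : ℝ → ℝ} (hZ : Continuous Z)
    {w : Fin N → ℝ} (hw : weightedWealth γ w ≠ 0) (t : ℝ) :
    ∃ K, ∃ s ∈ 𝓝 w, ∀ᶠ τ in 𝓝 t, LipschitzOnWith K (llsField r Z γ τ) s := by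
  simpa only [llsField_eq_smul_add_smul] using
    (contDiffAt_mul_div_weightedWealth hw).exists_eventually_lipschitzOnWith_smul_add_smul r
      hZ.continuousAt

theorem hasDerivAt_llsField_ansatz (r : ℝ) (Z : ℝ → ℝ) (γ w₀ : Fin N → ℝ) {φ : ℝ → ℝ} {t : ℝ}
    (hφ : HasDerivAt φ
      (exp (-(r * t)) * Z t / ∑ j, (1 - γ j) * w₀ j / N * γ j * exp (γ j * φ t)) t) (i : Fin N) :
    HasDerivAt (fun s => w₀ i * exp (r * s + γ i * φ s))
      (llsField r Z γ t (fun j => w₀ j * exp (r * t + γ j * φ t)) i) t := by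
  set F := ∑ j, (1 - γ j) * w₀ j / N * γ j * exp (γ j * φ t) with hF
  have hmean : weightedWealth γ (fun j => w₀ j * exp (r * t + γ j * φ t)) = exp (r * t) * F := by
    simp only [hF, weightedWealth, Finset.mul_sum, exp_add]
    refine Finset.sum_congr rfl fun j _ => ?_
    ring
  have hexp :=
    ((((hasDerivAt_id t).const_mul r).fun_add (hφ.const_mul (γ i))).exp).const_mul (w₀ i)
  simp only [id, mul_one] at hexp
  refine hexp.congr_deriv ?_
  rw [llsField, hmean, exp_neg]
  ring

theorem llsField_solution_unique {r : ℝ} {Z : ℝ → ℝ} (hZ : Continuous Z) {w w' : ℝ → Fin N → ℝ}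
    (hw : ∀ t, 0 ≤ t → weightedWealth γ (w t) ≠ 0)
    (hsol : ∀ t, 0 ≤ t → HasDerivAt w (llsField r Z γ t (w t)) t)
    (hsol' : ∀ t, 0 ≤ t → HasDerivAt w' (llsField r Z γ t (w' t)) t) (h₀ : w 0 = w' 0) :
    EqOn w w' (Ici 0) :=
  ODE_solution_unique_of_mem_Ici
    (fun t ht => (llsField_exists_eventually_lipschitzOnWith r hZ (hw t ht) t).imp
      fun _ ⟨s, hs, hlip⟩ => ⟨s, hs, hlip.filter_mono nhdsWithin_le_nhds⟩)
    hsol hsol' h₀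

end LLS

theorem lls_global_wellposedness_general
    (N : ℕ) (hN : 0 < N) (r : ℝ) (hr : 0 < r)
    (Z : ℝ → ℝ) (hZreg : ContDiff ℝ 1 Z)
    (hZnn : ∀ t, 0 ≤ t → 0 ≤ Z t)
    (γ : Fin N → ℝ) (hγ : ∀ i, γ i ∈ Set.Ioo (0 : ℝ) 1)
    (w0 : Fin N → ℝ) (hw0 : ∀ i, 0 < w0 i) :
    ∃ w : ℝ → Fin N → ℝ,
      ((∀ i, w 0 i = w0 i) ∧
        (∀ t, 0 ≤ t → ∀ i, HasDerivAt (fun s => w s i)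
          (r * w t i + γ i * w t i * Z t /
            ((1 / (N : ℝ)) * ∑ j, (1 - γ j) * γ j * w t j)) t)) ∧
      (∀ w' : ℝ → Fin N → ℝ,
        ((∀ i, w' 0 i = w0 i) ∧
          (∀ t, 0 ≤ t → ∀ i, HasDerivAt (fun s => w' s i)
            (r * w' t i + γ i * w' t i * Z t /
              ((1 / (N : ℝ)) * ∑ j, (1 - γ j) * γ j * w' t j)) t)) →
        ∀ t, 0 ≤ t → ∀ i, w' t i = w t i) ∧
      (0 < (1 / (N : ℝ)) * ∑ j, (1 - γ j) * γ j * w0 j) ∧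
      (∀ t, 0 ≤ t →
        (1 / (N : ℝ)) * ∑ j, (1 - γ j) * γ j * w0 j ≤
          (1 / (N : ℝ)) * ∑ j, (1 - γ j) * γ j * w t j) := by
  have : Nonempty (Fin N) := Fin.pos_iff_nonempty.mp hN
  have hγ₀ : ∀ i, 0 < γ i := fun i => (hγ i).1
  set a : Fin N → ℝ := fun j => (1 - γ j) * w0 j / N
  have ha : ∀ j, 0 < a j := fun j =>
    div_pos (mul_pos (sub_pos.mpr (hγ j).2) (hw0 j)) (Nat.cast_pos.mpr hN)
  obtain ⟨φ, hφ₀, hφ⟩ := exists_hasDerivAt_eq_div_of_range_eq_Ioi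
    (g := fun t => exp (-(r * t)) * Z t) (hasDerivAt_sum_mul_exp a γ)
    (sum_mul_exp_pos (fun j => a j * γ j) γ fun j => mul_pos (ha j) (hγ₀ j))
    (range_sum_mul_exp a γ ha hγ₀) (by fun_prop) fun t ht => mul_nonneg (exp_pos _).le (hZnn t ht)
  set w : ℝ → Fin N → ℝ := fun t i => w0 i * exp (r * t + γ i * φ t)
  have hsol : ∀ t, 0 ≤ t → ∀ i, HasDerivAt (fun s => w s i) (llsField r Z γ t (w t) i) t :=
    fun t ht => hasDerivAt_llsField_ansatz r Z γ w0 (hφ t ht).2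
  have hgrowth : ∀ t, 0 ≤ t → weightedWealth γ w0 ≤ weightedWealth γ (w t) :=
    fun t ht => weightedWealth_mono hγ fun i => le_mul_of_one_le_right (hw0 i).le
      (one_le_exp (add_nonneg (by positivity) (mul_nonneg (hγ₀ i).le (hφ t ht).1)))
  have hpos : 0 < weightedWealth γ w0 := weightedWealth_pos hN hγ hw0
  refine ⟨w, ⟨fun i => by simp [w, hφ₀], hsol⟩, fun w' ⟨h₀', hsol'⟩ t ht i => ?_, hpos, hgrowth⟩
  have huniq := llsField_solution_unique hZreg.continuous
    (fun t ht => (hpos.trans_le (hgrowth t ht)).ne')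
    (fun t ht => hasDerivAt_pi.mpr (hsol t ht)) (fun t ht => hasDerivAt_pi.mpr (hsol' t ht))
    (funext fun i => by simp [w, hφ₀, h₀'])
  exact (congrFun (huniq ht) i).symm

/-- Global existence and uniqueness for the explicit reformulation of the
simplified Levy-Levy-Solomon wealth ODE system, together with the lower bound
on the weighted wealth sum appearing in the denominator. -/
theorem lls_global_wellposedness
    (N : ℕ) (hN : 0 < N) (r B : ℝ) (hr : 0 < r) (hB : 0 < B)
    (Z : ℝ → ℝ) (hZreg : ContDiff ℝ 1 Z)
    (hZnn : ∀ t, 0 ≤ t → 0 ≤ Z t) (hZ' : ∀ t, 0 ≤ t → |deriv Z t| ≤ B)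
    (γ : Fin N → ℝ) (hγ : ∀ i, γ i ∈ Set.Ioo (0 : ℝ) 1)
    (w0 : Fin N → ℝ) (hw0 : ∀ i, 0 < w0 i) :
    ∃ w : ℝ → Fin N → ℝ,
      ((∀ i, w 0 i = w0 i) ∧
        (∀ t, 0 ≤ t → ∀ i, HasDerivAt (fun s => w s i)
          (r * w t i + γ i * w t i * Z t /
            ((1 / (N : ℝ)) * ∑ j, (1 - γ j) * γ j * w t j)) t)) ∧
      (∀ w' : ℝ → Fin N → ℝ,
        ((∀ i, w' 0 i = w0 i) ∧
          (∀ t, 0 ≤ t → ∀ i, HasDerivAt (fun s => w' s i)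
            (r * w' t i + γ i * w' t i * Z t /
              ((1 / (N : ℝ)) * ∑ j, (1 - γ j) * γ j * w' t j)) t)) →
        ∀ t, 0 ≤ t → ∀ i, w' t i = w t i) ∧
      (0 < (1 / (N : ℝ)) * ∑ j, (1 - γ j) * γ j * w0 j) ∧
      (∀ t, 0 ≤ t →
        (1 / (N : ℝ)) * ∑ j, (1 - γ j) * γ j * w0 j ≤
          (1 / (N : ℝ)) * ∑ j, (1 - γ j) * γ j * w t j) :=
  lls_global_wellposedness_general N hN r hr Z hZreg hZnn γ hγ w0 hw0
end

section
/- Let r > 0 and Z : [0,∞) → ℝ_{≥0} continuous, and let A : [0,∞) → ℝ_{>0} be continuous. Define B(t,γ) = ∫₀ᵗ (r + γ·Z(s)/A(s)) ds + c̃ for γ ∈ (0,1). Then the function f(t,w,γ) = (c/w)·exp(−(ln w − B(t,γ))²), for w > 0, satisfies the transport equation ∂ₜ f(t,w,γ) + ∂_w((r·w + γ·w·Z(t)/A(t))·f(t,w,γ)) = 0 pointwise. -/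
open intervalIntegral

/-!
Since `w f = c exp(-(log w - B)²)`, the flux derivative is `∂_w (k w f) = -2 (log w - B) k f` with
`k = r + γ Z(t)/A(t)`, while `∂ₜ f = 2 (log w - B) (∂ₜ B) f`. The two cancel because `∂ₜ B = k` by the
fundamental theorem of calculus, which needs the integrand only to be continuous on `[0, t]`, where `A > 0`.
-/

noncomputable def logNormalProfile (c b w : ℝ) : ℝ :=
  c / w * Real.exp (-(Real.log w - b) ^ 2)

theorem hasDerivAt_logNormalProfile_center {c w b' t : ℝ} {b : ℝ → ℝ} (hb : HasDerivAt b b' t) :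
    HasDerivAt (fun τ => logNormalProfile c (b τ) w)
      (2 * (Real.log w - b t) * b' * logNormalProfile c (b t) w) t := by
  have hexp := ((((hasDerivAt_const t (Real.log w)).sub hb).pow 2).neg.exp).const_mul (c / w)
  refine hexp.congr_deriv ?_
  simp only [logNormalProfile, Pi.sub_apply, Pi.pow_apply, Pi.neg_apply]
  ring

theorem mul_logNormalProfile_of_ne_zero {c b x : ℝ} (hx : x ≠ 0) :
    x * logNormalProfile c b x = c * Real.exp (-(Real.log x - b) ^ 2) := by
  rw [logNormalProfile]
  field_simp

theorem hasDerivAt_linear_mul_logNormalProfile {c b k w : ℝ} (hw : 0 < w) :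
    HasDerivAt (fun x => k * x * logNormalProfile c b x)
      (-(2 * (Real.log w - b) * k) * logNormalProfile c b w) w := by
  have hexp := ((((Real.hasDerivAt_log hw.ne').sub_const b).pow 2).neg.exp).const_mul (k * c)
  have hnear : (fun x => k * c * Real.exp (-(Real.log x - b) ^ 2)) =ᶠ[nhds w]
      fun x => k * x * logNormalProfile c b x := by
    filter_upwards [eventually_ne_nhds hw.ne'] with x hx
    rw [mul_assoc k x, mul_logNormalProfile_of_ne_zero hx, mul_assoc]
  refine (hexp.congr_of_eventuallyEq hnear.symm).congr_deriv ?_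
  simp only [logNormalProfile, Pi.pow_apply, Pi.neg_apply]
  field_simp
  ring

theorem logNormalProfile_transport {c k t w : ℝ} {b : ℝ → ℝ} (hb : HasDerivAt b k t) (hw : 0 < w) :
    deriv (fun τ => logNormalProfile c (b τ) w) t +
      deriv (fun x => k * x * logNormalProfile c (b t) x) w = 0 := by
  rw [(hasDerivAt_logNormalProfile_center hb).deriv,
    (hasDerivAt_linear_mul_logNormalProfile hw).deriv]
  ring

theorem hasDerivAt_integral_of_measurable {φ : ℝ → ℝ} {a t : ℝ} (hm : Measurable φ)
    (hc : ∀ s ∈ Set.uIcc a t, ContinuousAt φ s) :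
    HasDerivAt (fun τ => ∫ s in a..τ, φ s) (φ t) t :=
  integral_hasDerivAt_right
    (ContinuousOn.intervalIntegrable fun s hs => (hc s hs).continuousWithinAt)
    hm.stronglyMeasurable.stronglyMeasurableAtFilter (hc t Set.right_mem_uIcc)

theorem lls_lognormal_ansatz_general
    (r c ctilde : ℝ)
    (Z A : ℝ → ℝ) (hZ : Continuous Z)
    (hA : Continuous A) (hApos : ∀ t, 0 ≤ t → 0 < A t)
    (B : ℝ → ℝ → ℝ)
    (hB : ∀ t γ, B t γ = (∫ s in (0 : ℝ)..t, (r + γ * Z s / A s)) + ctilde)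
    (f : ℝ → ℝ → ℝ → ℝ)
    (hf : ∀ t w γ, f t w γ = c / w * Real.exp (-(Real.log w - B t γ) ^ 2)) :
    ∀ t, 0 ≤ t → ∀ w, 0 < w → ∀ γ ∈ Set.Ioo (0 : ℝ) 1,
      deriv (fun τ => f τ w γ) t +
        deriv (fun x => (r * x + γ * x * Z t / A t) * f t x γ) w = 0 := by
  intro t ht w hw γ _
  have hdrift : ∀ s ∈ Set.uIcc 0 t, ContinuousAt (fun s => r + γ * Z s / A s) s := by
    intro s hs
    rw [Set.uIcc_of_le ht] at hs
    exact continuousAt_const.add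
      ((hZ.continuousAt.const_mul γ).div hA.continuousAt (hApos s hs.1).ne')
  have hBt : HasDerivAt (fun τ => B τ γ) (r + γ * Z t / A t) t := by
    simp only [hB]
    exact (hasDerivAt_integral_of_measurable
      (measurable_const.add ((hZ.measurable.const_mul γ).div hA.measurable)) hdrift).add_const ctilde
  have hf' : f = fun t w γ => logNormalProfile c (B t γ) w := funext₃ hf
  have hdrift_linear : (fun x => (r * x + γ * x * Z t / A t) * f t x γ) =
      fun x => (r + γ * Z t / A t) * x * logNormalProfile c (B t γ) x := by
    funext x
    rw [hf']
    ring
  rw [hdrift_linear, hf']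
  exact logNormalProfile_transport hBt hw

/-- Verification of the explicit log-normal-type solution ansatz for the
mean-field Levy-Levy-Solomon transport equation with prescribed positive
coefficient `A(t)`: the function `f(t,w,γ) = (c/w)·exp(−(ln w − B(t,γ))²)`
with `B(t,γ) = ∫₀ᵗ (r + γZ(s)/A(s)) ds + c̃` satisfies
`∂ₜ f + ∂_w((r·w + γ·w·Z(t)/A(t))·f) = 0` pointwise. -/
theorem lls_lognormal_ansatz
    (r c ctilde : ℝ) (hr : 0 < r) (hc : 0 < c)
    (Z A : ℝ → ℝ) (hZ : Continuous Z) (hZnn : ∀ t, 0 ≤ t → 0 ≤ Z t)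
    (hA : Continuous A) (hApos : ∀ t, 0 ≤ t → 0 < A t)
    (B : ℝ → ℝ → ℝ)
    (hB : ∀ t γ, B t γ = (∫ s in (0 : ℝ)..t, (r + γ * Z s / A s)) + ctilde)
    (f : ℝ → ℝ → ℝ → ℝ)
    (hf : ∀ t w γ, f t w γ = c / w * Real.exp (-(Real.log w - B t γ) ^ 2)) :
    ∀ t, 0 ≤ t → ∀ w, 0 < w → ∀ γ ∈ Set.Ioo (0 : ℝ) 1,
      deriv (fun τ => f τ w γ) t +
        deriv (fun x => (r * x + γ * x * Z t / A t) * f t x γ) w = 0 :=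
  lls_lognormal_ansatz_general r c ctilde Z A hZ hA hApos B hB f hf
end
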